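/- Let G be a finite simple graph on n vertices, n ≥ 2, and let k ≥ 3 be an integer. If every cycle of G has length strictly greater than 2⌈log_{k−1} n⌉, then G is (k − 1)-degenerate; that is, every nonempty subgraph of G contains a vertex whose degree in that subgraph is at most k − 1. In particular, G has no subgraph with minimum degree k. -/

import Mathlib

/-!
Suppose some subgraph has minimum degree at least `k`, and grow breadth-first spheres around one
of its vertices. While the radius `i` is below `r = ⌈log_{k-1} n⌉`, a vertex at distance `i` has at
most one neighbour at distance `≤ i`, and two vertices at distance `i` have no common neighbour at
distance `i + 1`: otherwise two shortest paths from the centre close a cycle of length `≤ 2r`.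
So each sphere is at least `k - 1` times larger than the previous one, and the sphere of radius `r`
alone has `(k - 1) ^ r ≥ n` vertices, none of which is the centre.
-/

open Finset

namespace SimpleGraph

variable {V : Type*} {G : SimpleGraph V} {v x a b : V}

theorem exists_isCycle_length_le_dist_add_dist (hx : G.Reachable v x) (ha : G.Adj x a)
    (hb : G.Adj x b) (hab : a ≠ b) (hax : G.dist v a ≤ G.dist v x)
    (hbx : G.dist v b ≤ G.dist v x) :
    ∃ (y : V) (c : G.Walk y y), c.IsCycle ∧ c.length ≤ G.dist v a + G.dist v b + 2 := by
  classical
  have geodesic_concat {a : V} (ha : G.Adj x a) (hax : G.dist v a ≤ G.dist v x) :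
      ∃ p : G.Walk v a, (p.concat ha.symm).IsPath ∧ p.length = G.dist v a := by
    obtain ⟨p, hp, hpa⟩ := (hx.trans ha.reachable).exists_path_of_dist
    refine ⟨p, hp.concat (fun hxp => ?_) ha.symm, hpa⟩
    have := (G.dist_le (p.takeUntil x hxp)).trans_lt
      (p.length_takeUntil_lt_length hxp ha.ne)
    omega
  obtain ⟨p, hp, hpa⟩ := geodesic_concat ha hax
  obtain ⟨q, hq, hqb⟩ := geodesic_concat hb hbx
  have hpq : p.concat ha.symm ≠ q.concat hb.symm := fun h => hab (Walk.concat_inj h).1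
  obtain ⟨y, -, -, c, hc, hlen⟩ := hp.exists_isCycle_length_le_add_of_ne hq hpq
  simp only [Walk.length_concat] at hlen
  exact ⟨y, c, hc, by omega⟩

variable {r : ℕ}

theorem subsingleton_adj_dist_lt_of_lt_egirth (hg : 2 * r < G.egirth) (hx : G.Reachable v x) :
    {a | G.Adj x a ∧ G.dist v a ≤ G.dist v x ∧ G.dist v a < r}.Subsingleton := by
  rintro a ⟨ha, hax, har⟩ b ⟨hb, hbx, hbr⟩
  by_contra hab
  obtain ⟨y, c, hc, hlen⟩ := exists_isCycle_length_le_dist_add_dist hx ha hb hab hax hbx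
  have : (c.length : ℕ∞) ≤ 2 * r := by exact_mod_cast (by omega : c.length ≤ 2 * r)
  exact (hg.trans_le (G.egirth_le_length hc)).not_ge this

open Classical in
/-- Reachability is required because `G.dist` is `0` between vertices in different components. -/
noncomputable def distSphere [Fintype V] (G : SimpleGraph V) (v : V) (i : ℕ) : Finset V :=
  {w | G.Reachable v w ∧ G.dist v w = i}

variable [Fintype V]

theorem mem_distSphere {i : ℕ} {w : V} :
    w ∈ G.distSphere v i ↔ G.Reachable v w ∧ G.dist v w = i := by
  simp [distSphere]

variable [DecidableRel G.Adj] {k : ℕ}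

theorem le_card_filter_adj_distSphere (hg : 2 * r < G.egirth) (hdeg : ∀ u, k ≤ G.degree u)
    {i : ℕ} (hi : i < r) {u : V} (hu : u ∈ G.distSphere v i) :
    k - 1 ≤ #{w ∈ G.distSphere v (i + 1) | G.Adj u w} := by
  classical
  rw [mem_distSphere] at hu
  set A := {w ∈ G.distSphere v (i + 1) | G.Adj u w}
  have hrest : #(G.neighborFinset u \ A) ≤ 1 := by
    refine Finset.card_le_one.mpr fun a ha b hb => ?_
    have back {w : V} (hw : w ∈ G.neighborFinset u \ A) :
        G.Adj u w ∧ G.dist v w ≤ G.dist v u ∧ G.dist v w < r := by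
      simp only [A, Finset.mem_sdiff, mem_neighborFinset, Finset.mem_filter, mem_distSphere,
        not_and] at hw
      have hne : G.dist v w ≠ i + 1 := fun h => hw.2 ⟨hu.1.trans hw.1.reachable, h⟩ hw.1
      have := hw.1.diff_dist_adj (u := v)
      exact ⟨hw.1, by omega, by omega⟩
    exact subsingleton_adj_dist_lt_of_lt_egirth hg hu.1 (back ha) (back hb)
  have hsplit := Finset.card_le_card_sdiff_add_card (s := G.neighborFinset u) (t := A)
  have hku := hdeg u
  rw [← card_neighborFinset_eq_degree] at hku
  omega

theorem card_filter_adj_distSphere_le_one (hg : 2 * r < G.egirth) {i : ℕ} (hi : i < r) {w : V}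
    (hw : w ∈ G.distSphere v (i + 1)) : #{u ∈ G.distSphere v i | G.Adj u w} ≤ 1 := by
  rw [mem_distSphere] at hw
  refine Finset.card_le_one.mpr fun a ha b hb => ?_
  simp only [Finset.mem_filter, mem_distSphere] at ha hb
  exact subsingleton_adj_dist_lt_of_lt_egirth hg hw.1
    ⟨ha.2.symm, by omega, by omega⟩ ⟨hb.2.symm, by omega, by omega⟩

theorem mul_card_distSphere_le (hg : 2 * r < G.egirth) (hdeg : ∀ u, k ≤ G.degree u) {i : ℕ}
    (hi : i < r) : (k - 1) * #(G.distSphere v i) ≤ #(G.distSphere v (i + 1)) := by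
  simpa [mul_comm] using Finset.card_mul_le_card_mul G.Adj
    (fun u hu => le_card_filter_adj_distSphere hg hdeg hi hu)
    (fun w hw => card_filter_adj_distSphere_le_one hg hi hw)

theorem pow_le_card_distSphere (hg : 2 * r < G.egirth) (hdeg : ∀ u, k ≤ G.degree u) :
    ∀ i ≤ r, (k - 1) ^ i ≤ #(G.distSphere v i)
  | 0, _ => Finset.one_le_card.mpr ⟨v, mem_distSphere.mpr ⟨.refl v, G.dist_self⟩⟩
  | i + 1, hi => calc
      (k - 1) ^ (i + 1) = (k - 1) * (k - 1) ^ i := pow_succ' _ _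
      _ ≤ (k - 1) * #(G.distSphere v i) :=
        Nat.mul_le_mul_left _ (pow_le_card_distSphere hg hdeg i (by omega))
      _ ≤ #(G.distSphere v (i + 1)) := mul_card_distSphere_le hg hdeg (by omega)

theorem pow_lt_card_of_lt_egirth (v : V) (hr : 0 < r) (hg : 2 * r < G.egirth)
    (hdeg : ∀ u, k ≤ G.degree u) : (k - 1) ^ r < Fintype.card V :=
  (pow_le_card_distSphere (v := v) hg hdeg r le_rfl).trans_lt <|
    Finset.card_lt_univ_of_notMem fun hv => by
      rw [mem_distSphere, dist_self] at hv
      omega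

end SimpleGraph

open SimpleGraph

/-- If every cycle of a finite simple graph `G` on `n ≥ 2` vertices has length
strictly greater than `2⌈log_{k-1} n⌉` (where `k ≥ 3`), then `G` is
`(k-1)`-degenerate: every subgraph with nonempty vertex set has a vertex of
degree at most `k - 1` within that subgraph. In particular, `G` has no
subgraph (with nonempty vertex set) of minimum degree at least `k`. -/
theorem degenerate_of_no_short_cycles {V : Type} [Fintype V]
    (G : SimpleGraph V) (k : ℕ) (hk : 3 ≤ k) (hn : 2 ≤ Fintype.card V)
    (hcyc : ∀ (v : V) (c : G.Walk v v), c.IsCycle →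
      2 * Nat.clog (k - 1) (Fintype.card V) < c.length) :
    (∀ H : G.Subgraph, H.verts.Nonempty →
      ∃ v ∈ H.verts, (H.neighborSet v).ncard ≤ k - 1) ∧
    ¬ ∃ H : G.Subgraph, H.verts.Nonempty ∧
      ∀ v ∈ H.verts, k ≤ (H.neighborSet v).ncard := by
  classical
  set r := Nat.clog (k - 1) (Fintype.card V)
  have hr : 0 < r := Nat.clog_pos (by omega) (by omega)
  have hg : 2 * r < G.egirth :=
    (ENat.add_one_le_iff (by exact_mod_cast ENat.natCast_ne_top (2 * r))).mp <|
      le_egirth.mpr fun v c hc => by exact_mod_cast hcyc v c hc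
  have no_dense_subgraph : ¬ ∃ H : G.Subgraph, H.verts.Nonempty ∧
      ∀ v ∈ H.verts, k ≤ (H.neighborSet v).ncard := by
    rintro ⟨H, ⟨v, hv⟩, hdeg⟩
    have hlt := H.coe.pow_lt_card_of_lt_egirth (k := k) ⟨v, hv⟩ hr
      (hg.trans_le H.coe_isContained.egirth_le) fun u => by
        rw [Subgraph.coe_degree, ← Subgraph.finset_card_neighborSet_eq_degree,
          ← Set.ncard_eq_toFinset_card']
        exact hdeg u u.2
    have hle : Fintype.card H.verts ≤ Fintype.card V := Fintype.card_subtype_le _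
    have hcard : Fintype.card V ≤ (k - 1) ^ r := Nat.le_pow_clog (by omega) _
    omega
  refine ⟨fun H hH => ?_, no_dense_subgraph⟩
  by_contra! h
  exact no_dense_subgraph ⟨H, hH, fun v hv => by have := h v hv; omega⟩
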